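/- arXiv:0706.1773 — 2 statements merged into one kernel-verified Lean document; each statement's English description precedes it below -/
import Mathlib

section
/- Fix complex numbers a, b and fix γ ∈ (0, π/2). Define, for ε in the sector S⁺ = {ε : 0 < |ε| < r, arg(ε) ∈ (-π+γ, π-γ)}, μ⁺(ε) = (-2πi / (Γ(1-a)Γ(1-b))) · ε^{1-a-b} · Γ(1 + 1/ε) / Γ(a + b + 1/ε). Then lim_{ε→0, ε∈S⁺} μ⁺(ε) = -2πi / (Γ(1-a)Γ(1-b)). -/
open Complex Real Filter Topology

/-!
Put `z = 1/ε` and `s = a + b`. Off the negative axis `ε ^ (1 - a - b) = z ^ (s - 1)`, so it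
suffices that `z ^ (s - 1) Γ(z + 1) / Γ(z + s) → 1` as `z → ∞` with `|arg z| ≤ π - γ`. By Gauss's
formula this quantity is the limit as `N → ∞` of
`z ^ (s - 1) N ^ (1 - s) ∏_{j ≤ N} (1 + (s - 1) / (z + 1 + j))`. Comparing each
`log (1 + (s - 1) / (z + 1 + j))` with `(s - 1) log (1 + 1 / (z + 1 + j))`, whose sum telescopes to
`(s - 1) (log (z + N + 2) - log (z + 1))`, leaves errors of size `|z + 1 + j|⁻²`. On a sector
`|arg z| ≤ θ < π` one has `|z + t| ≥ cos (θ / 2) (|z| + t)` for `t ≥ 0`, so these errors sum to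
`O(1/|z|)` uniformly in `N`.
-/

theorem sum_range_inv_add_one_add_sq_le {x : ℝ} (hx : 0 < x) (n : ℕ) :
    ∑ j ∈ Finset.range n, ((x + 1 + j) ^ 2)⁻¹ ≤ x⁻¹ := by
  calc ∑ j ∈ Finset.range n, ((x + 1 + j) ^ 2)⁻¹
      ≤ ∑ j ∈ Finset.range n, ((x + j)⁻¹ - (x + (j + 1 : ℕ))⁻¹) := by
        gcongr with j
        rw [inv_sub_inv (by positivity) (by positivity)]
        push_cast
        rw [← one_div, div_le_div_iff₀ (by positivity) (by positivity)]
        nlinarith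
    _ = x⁻¹ - (x + n)⁻¹ := by rw [Finset.sum_range_sub']; simp
    _ ≤ x⁻¹ := sub_le_self _ (inv_nonneg.2 (by positivity))

namespace Complex

theorem add_ofReal_mem_slitPlane {w : ℂ} (hw : w ∈ slitPlane) {t : ℝ} (ht : 0 ≤ t) :
    w + t ∈ slitPlane := by
  rw [mem_slitPlane_iff] at hw ⊢
  simp only [add_re, ofReal_re, add_im, ofReal_im, add_zero]
  exact hw.imp_left fun h ↦ by linarith

theorem add_one_add_natCast_ne_zero {w : ℂ} (hw : w ∈ slitPlane) (j : ℕ) : w + 1 + j ≠ 0 := by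
  simpa [add_assoc] using
    slitPlane_ne_zero (add_ofReal_mem_slitPlane hw (t := 1 + j) (by positivity))

/- `w` and `1 + w⁻¹` lie in opposite closed half-planes, so their arguments add up without
leaving `(-π, π]`. -/
theorem log_add_one_eq {w : ℂ} (hw : w ∈ slitPlane) :
    log (w + 1) = log w + log (1 + w⁻¹) := by
  have hw₀ := slitPlane_ne_zero hw
  have hinv_im : (1 + w⁻¹).im = -w.im / normSq w := by simp [neg_div]
  have hnormSq := normSq_pos.2 hw₀
  have h₁ : 1 + w⁻¹ ≠ 0 := by
    rw [← mul_ne_zero_iff_left hw₀, mul_add, mul_inv_cancel₀ hw₀, mul_one]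
    simpa using add_one_add_natCast_ne_zero hw 0
  rw [show w + 1 = w * (1 + w⁻¹) by field_simp, log_mul hw₀ h₁]
  rcases lt_trichotomy w.im 0 with him | him | him
  · have : 0 ≤ (1 + w⁻¹).im := by rw [hinv_im]; exact div_nonneg (by linarith) hnormSq.le
    constructor <;> linarith [arg_neg_iff.2 him, arg_nonneg_iff.2 this, neg_pi_lt_arg w,
      arg_le_pi (1 + w⁻¹)]
  · have hre : 0 < w.re := (mem_slitPlane_iff.1 hw).resolve_right (not_not.2 him)
    rw [arg_eq_zero_iff.2 ⟨hre.le, him⟩, zero_add]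
    exact ⟨neg_pi_lt_arg _, arg_le_pi _⟩
  · have : (1 + w⁻¹).im < 0 := by rw [hinv_im]; exact div_neg_of_neg_of_pos (by linarith) hnormSq
    constructor <;> linarith [arg_neg_iff.2 this, arg_nonneg_iff.2 him.le, neg_pi_lt_arg (1 + w⁻¹),
      arg_le_pi w]

theorem sum_range_log_one_add_inv {w : ℂ} (hw : w ∈ slitPlane) (n : ℕ) :
    ∑ j ∈ Finset.range n, log (1 + (w + j)⁻¹) = log (w + n) - log w := by
  induction n with
  | zero => simp
  | succ n ih =>
    have hwn : w + (n : ℝ) ∈ slitPlane := add_ofReal_mem_slitPlane hw n.cast_nonneg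
    rw [Finset.sum_range_succ, ih, Nat.cast_succ, ← add_assoc]
    push_cast at hwn
    rw [log_add_one_eq hwn]
    ring

theorem norm_log_one_add_sub_self_le_sq {u : ℂ} (hu : ‖u‖ ≤ 1 / 2) :
    ‖log (1 + u) - u‖ ≤ ‖u‖ ^ 2 := by
  have h₂ : (1 - ‖u‖)⁻¹ ≤ 2 := by rw [inv_le_comm₀ (by linarith) two_pos]; linarith
  calc ‖log (1 + u) - u‖ ≤ ‖u‖ ^ 2 * (1 - ‖u‖)⁻¹ / 2 := norm_log_one_add_sub_self_le (by linarith)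
    _ ≤ ‖u‖ ^ 2 * 2 / 2 := by gcongr
    _ = ‖u‖ ^ 2 := by ring

theorem norm_log_one_add_mul_sub_mul_log_one_add_le {σ u : ℂ} (hu : ‖u‖ ≤ 1 / 2)
    (hσu : ‖σ * u‖ ≤ 1 / 2) :
    ‖log (1 + σ * u) - σ * log (1 + u)‖ ≤ (‖σ‖ + ‖σ‖ ^ 2) * ‖u‖ ^ 2 := by
  calc ‖log (1 + σ * u) - σ * log (1 + u)‖
      = ‖(log (1 + σ * u) - σ * u) - σ * (log (1 + u) - u)‖ := by ring_nf
    _ ≤ ‖σ * u‖ ^ 2 + ‖σ‖ * ‖u‖ ^ 2 := by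
      grw [norm_sub_le, norm_mul, norm_log_one_add_sub_self_le_sq hσu,
        norm_log_one_add_sub_self_le_sq hu]
    _ = (‖σ‖ + ‖σ‖ ^ 2) * ‖u‖ ^ 2 := by rw [norm_mul]; ring

theorem GammaSeq_div_GammaSeq (u v : ℂ) {n : ℕ} (hn : n ≠ 0) :
    GammaSeq u n / GammaSeq v n =
      (n : ℂ) ^ (u - v) * ∏ j ∈ Finset.range (n + 1), (v + j) / (u + j) := by
  have hn' : (n : ℂ) ≠ 0 := Nat.cast_ne_zero.2 hn
  have hfac : (n.factorial : ℂ) ≠ 0 := Nat.cast_ne_zero.2 n.factorial_ne_zero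
  have hv : (n : ℂ) ^ v ≠ 0 := by simp [cpow_eq_zero_iff, hn']
  rw [GammaSeq, GammaSeq, Finset.prod_div_distrib, show (n : ℂ) ^ u = n ^ (u - v) * n ^ v by
    rw [← cpow_add _ _ hn', sub_add_cancel]]
  simp only [div_eq_mul_inv, mul_inv, inv_inv]
  field_simp

theorem tendsto_log_add_natCast_sub_log (w : ℂ) :
    Tendsto (fun n : ℕ ↦ log (w + n) - log n) atTop (𝓝 0) := by
  have hquot : Tendsto (fun n : ℕ ↦ 1 + w / n) atTop (𝓝 1) := by
    simpa using (tendsto_const_div_atTop_nhds_zero_nat w).const_add 1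
  have hlog : Tendsto (fun n : ℕ ↦ log (1 + w / n)) atTop (𝓝 0) := by
    simpa [Function.comp_def] using ((continuousAt_clog one_mem_slitPlane).tendsto).comp hquot
  refine hlog.congr' ?_
  filter_upwards [hquot.eventually_ne one_ne_zero, eventually_ne_atTop 0] with n hne hn
  have hn' : (0 : ℝ) < n := by positivity
  rw [show w + n = ((n : ℝ) : ℂ) * (1 + w / n) by push_cast; field_simp; ring,
    log_ofReal_mul hn' hne, ← natCast_log]
  push_cast
  ring

theorem norm_sub_one_le_of_tendsto_exp {v : ℂ} {a : ℕ → ℂ} {B : ℝ} (hB : B ≤ 1)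
    (ha : ∀ n, ‖a n‖ ≤ B) (hv : Tendsto (fun n ↦ exp (a n)) atTop (𝓝 v)) :
    ‖v - 1‖ ≤ 2 * B :=
  le_of_tendsto' (hv.sub_const 1).norm fun n ↦
    (norm_exp_sub_one_le ((ha n).trans hB)).trans (by linarith [ha n])

/-- With `N ^ (1 - s)` replaced by `(z + N + 2) ^ (1 - s)`, this is the logarithm of Gauss's
approximation `z ^ (s - 1) * GammaSeq (z + 1) N / GammaSeq (z + s) N`. -/
noncomputable def gammaRatioExponent (s z : ℂ) (N : ℕ) : ℂ :=
  (s - 1) * (log z - log (z + 1)) +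
    ∑ j ∈ Finset.range (N + 1),
      (log (1 + (s - 1) * (z + 1 + j)⁻¹) - (s - 1) * log (1 + (z + 1 + j)⁻¹))

theorem cpow_mul_GammaSeq_div_GammaSeq_eq_exp {s z : ℂ} (hz : z ∈ slitPlane)
    (hzs : ∀ j : ℕ, z + s + j ≠ 0) {N : ℕ} (hN : N ≠ 0) :
    z ^ (s - 1) * (GammaSeq (z + 1) N / GammaSeq (z + s) N) =
      exp (gammaRatioExponent s z N + (s - 1) * (log (z + 1 + (N + 1 : ℕ)) - log N)) := by
  have hz₁ : z + 1 ∈ slitPlane := by simpa using add_ofReal_mem_slitPlane hz zero_le_one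
  have hw := add_one_add_natCast_ne_zero hz
  have hfactor : ∀ j : ℕ, (z + s + j) / (z + 1 + j) = 1 + (s - 1) * (z + 1 + j)⁻¹ := fun j ↦ by
    field_simp [hw j]; ring
  have hexponent : gammaRatioExponent s z N + (s - 1) * (log (z + 1 + (N + 1 : ℕ)) - log N) =
      log z * (s - 1) + log N * (1 - s) +
        ∑ j ∈ Finset.range (N + 1), log (1 + (s - 1) * (z + 1 + j)⁻¹) := by
    rw [gammaRatioExponent, Finset.sum_sub_distrib, ← Finset.mul_sum,
      sum_range_log_one_add_inv hz₁]
    ring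
  rw [hexponent, exp_add, exp_add, ← cpow_def_of_ne_zero (slitPlane_ne_zero hz),
    ← cpow_def_of_ne_zero (Nat.cast_ne_zero.2 hN), GammaSeq_div_GammaSeq _ _ hN, exp_sum]
  simp only [hfactor, add_sub_add_left_eq_sub]
  rw [Finset.prod_congr rfl fun j _ ↦
    exp_log (by rw [← hfactor]; exact div_ne_zero (hzs j) (hw j))]
  ring

theorem cos_half_mul_le_norm_add_ofReal {z : ℂ} {θ : ℝ} (hθ : θ ≤ π) (hz : |z.arg| ≤ θ)
    {t : ℝ} (ht : 0 ≤ t) : Real.cos (θ / 2) * (‖z‖ + t) ≤ ‖z + t‖ := by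
  have hθ₀ : 0 ≤ θ := (abs_nonneg _).trans hz
  have hre : ‖z‖ * Real.cos θ ≤ z.re := by
    rw [← norm_mul_cos_arg, ← Real.cos_abs z.arg]
    exact mul_le_mul_of_nonneg_left (Real.cos_le_cos_of_nonneg_of_le_pi (abs_nonneg _) hθ hz)
      (norm_nonneg _)
  have hc : 0 ≤ Real.cos (θ / 2) := Real.cos_nonneg_of_mem_Icc ⟨by linarith, by linarith⟩
  have hc_sq : Real.cos (θ / 2) ^ 2 = (1 + Real.cos θ) / 2 := by
    rw [Real.cos_sq, mul_div_cancel₀ _ two_ne_zero]; ring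
  have hnorm_sq : ‖z + t‖ ^ 2 = ‖z‖ ^ 2 + 2 * t * z.re + t ^ 2 := by
    simp only [Complex.sq_norm, normSq_apply, add_re, ofReal_re, add_im, ofReal_im, add_zero]; ring
  rw [← pow_le_pow_iff_left₀ (by positivity) (norm_nonneg _) two_ne_zero, mul_pow, hc_sq, hnorm_sq]
  nlinarith [sq_nonneg (‖z‖ - t), mul_le_mul_of_nonneg_left hre (by linarith : 0 ≤ 2 * t),
    Real.cos_le_one θ]

section SectorBounds

variable {z : ℂ} {c : ℝ} (hc : 0 < c) (hcz : ∀ t : ℝ, 0 ≤ t → c * (‖z‖ + t) ≤ ‖z + t‖)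
include hc hcz

theorem norm_inv_add_one_add_natCast_le (j : ℕ) : ‖(z + 1 + j)⁻¹‖ ≤ (c * (‖z‖ + 1 + j))⁻¹ := by
  have h := hcz (1 + j) (by positivity)
  push_cast at h
  rw [norm_inv]
  simpa only [add_assoc] using inv_anti₀ (by positivity) h

theorem sum_range_norm_inv_add_one_add_natCast_sq_le (hz : z ≠ 0) (n : ℕ) :
    ∑ j ∈ Finset.range n, ‖(z + 1 + j)⁻¹‖ ^ 2 ≤ (c ^ 2 * ‖z‖)⁻¹ :=
  calc ∑ j ∈ Finset.range n, ‖(z + 1 + j)⁻¹‖ ^ 2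
      ≤ ∑ j ∈ Finset.range n, (c ^ 2)⁻¹ * ((‖z‖ + 1 + j) ^ 2)⁻¹ := by
        gcongr with j
        grw [norm_inv_add_one_add_natCast_le hc hcz j]
        rw [inv_pow, mul_pow, mul_inv]
    _ ≤ (c ^ 2)⁻¹ * ‖z‖⁻¹ := by
        rw [← Finset.mul_sum]
        gcongr
        exact sum_range_inv_add_one_add_sq_le (norm_pos_iff.2 hz) n
    _ = (c ^ 2 * ‖z‖)⁻¹ := (mul_inv _ _).symm

theorem one_add_mul_norm_inv_add_one_add_natCast_le_half {σ : ℂ}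
    (hbig : 2 * (1 + ‖σ‖) ≤ c * ‖z‖) (j : ℕ) : (1 + ‖σ‖) * ‖(z + 1 + j)⁻¹‖ ≤ 1 / 2 := by
  have hcz₀ : 0 < c * ‖z‖ := by linarith [norm_nonneg σ]
  calc (1 + ‖σ‖) * ‖(z + 1 + j)⁻¹‖ ≤ (1 + ‖σ‖) * (c * ‖z‖)⁻¹ := by
        grw [norm_inv_add_one_add_natCast_le hc hcz j]
        gcongr
        linarith [(mul_pos_iff_of_pos_left hc).1 hcz₀]
    _ ≤ 1 / 2 := by
        rw [← div_eq_mul_inv, div_le_iff₀ hcz₀]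
        linarith

theorem add_add_natCast_ne_zero {s : ℂ} (hz : z ∈ slitPlane) (hbig : 2 * (1 + ‖s - 1‖) ≤ c * ‖z‖)
    (j : ℕ) : z + s + j ≠ 0 := by
  have hw := add_one_add_natCast_ne_zero hz j
  have hsmall : ‖(s - 1) * (z + 1 + j)⁻¹‖ < 1 := by
    rw [norm_mul]
    nlinarith [one_add_mul_norm_inv_add_one_add_natCast_le_half hc hcz hbig j,
      norm_nonneg (z + 1 + j)⁻¹]
  rw [show z + s + j = (z + 1 + j) * (1 + (s - 1) * (z + 1 + j)⁻¹) by field_simp; ring]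
  exact mul_ne_zero hw (slitPlane_ne_zero (mem_slitPlane_of_norm_lt_one hsmall))

theorem norm_gammaRatioExponent_le {s : ℂ} (hc₁ : c ≤ 1) (hz : z ∈ slitPlane)
    (hbig : 2 * (1 + ‖s - 1‖) ≤ c * ‖z‖) (N : ℕ) :
    ‖gammaRatioExponent s z N‖ ≤ 2 * (1 + ‖s - 1‖) ^ 2 / c ^ 2 / ‖z‖ := by
  set K := ‖s - 1‖
  have hK₀ : 0 ≤ K := norm_nonneg _
  have hz₀ : 0 < ‖z‖ := norm_pos_iff.2 (slitPlane_ne_zero hz)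
  have hu := one_add_mul_norm_inv_add_one_add_natCast_le_half hc hcz hbig
  have hz_half : ‖z⁻¹‖ ≤ 1 / 2 := by
    rw [norm_inv, inv_le_comm₀ hz₀ (by norm_num)]
    nlinarith
  have hlog : ‖(s - 1) * (log z - log (z + 1))‖ ≤ 3 / 2 * K * ‖z‖⁻¹ := by
    rw [log_add_one_eq hz, sub_add_cancel_left, mul_neg, norm_neg, norm_mul, ← norm_inv]
    grw [norm_log_one_add_half_le_self hz_half]
    linarith
  have hsum : ‖∑ j ∈ Finset.range (N + 1),
      (log (1 + (s - 1) * (z + 1 + j)⁻¹) - (s - 1) * log (1 + (z + 1 + j)⁻¹))‖ ≤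
      (K + K ^ 2) * (c ^ 2 * ‖z‖)⁻¹ := by
    grw [norm_sum_le, ← sum_range_norm_inv_add_one_add_natCast_sq_le hc hcz (slitPlane_ne_zero hz),
      Finset.mul_sum]
    gcongr with j
    have hj := hu j
    have hnorm := norm_nonneg (z + 1 + j)⁻¹
    exact norm_log_one_add_mul_sub_mul_log_one_add_le (by nlinarith)
      (by rw [norm_mul]; nlinarith)
  grw [gammaRatioExponent, norm_add_le, hlog, hsum]
  have hc₂ : c ^ 2 ≤ 1 := pow_le_one₀ hc.le hc₁
  field_simp
  nlinarith

theorem norm_cpow_mul_Gamma_div_Gamma_sub_one_le {s : ℂ} (hc₁ : c ≤ 1) (hz : z ∈ slitPlane)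
    (hbig : 2 * (1 + ‖s - 1‖) ^ 2 / c ^ 2 ≤ ‖z‖) :
    ‖z ^ (s - 1) * Gamma (z + 1) / Gamma (z + s) - 1‖ ≤
      2 * (2 * (1 + ‖s - 1‖) ^ 2 / c ^ 2 / ‖z‖) := by
  set M := 2 * (1 + ‖s - 1‖) ^ 2 / c ^ 2
  have hK₀ : 0 ≤ ‖s - 1‖ := norm_nonneg _
  have hbig' : 2 * (1 + ‖s - 1‖) ≤ c * ‖z‖ :=
    calc 2 * (1 + ‖s - 1‖) ≤ 2 * (1 + ‖s - 1‖) ^ 2 / c := by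
          rw [le_div_iff₀ hc]; nlinarith
      _ = c * M := by simp only [M]; field_simp
      _ ≤ c * ‖z‖ := by gcongr
  have hzs := add_add_natCast_ne_zero hc hcz hz hbig'
  have hΓ : Gamma (z + s) ≠ 0 := Gamma_ne_zero fun m hm ↦ hzs m (by rw [hm]; ring)
  have hvanish : Tendsto (fun N : ℕ ↦ exp ((s - 1) * (log (z + 1 + (N + 1 : ℕ)) - log N)))
      atTop (𝓝 1) := by
    have h := ((tendsto_log_add_natCast_sub_log (z + 2)).const_mul (s - 1)).cexp
    simp only [mul_zero, exp_zero] at h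
    refine h.congr fun N ↦ ?_
    push_cast
    ring_nf
  have hlim : Tendsto (fun N ↦ exp (gammaRatioExponent s z N)) atTop
      (𝓝 (z ^ (s - 1) * Gamma (z + 1) / Gamma (z + s))) := by
    have h := (((GammaSeq_tendsto_Gamma (z + 1)).div (GammaSeq_tendsto_Gamma (z + s)) hΓ).const_mul
      (z ^ (s - 1))).div hvanish one_ne_zero
    rw [div_one, ← mul_div_assoc] at h
    refine h.congr' ?_
    filter_upwards [eventually_ne_atTop 0] with N hN
    simp only [Pi.div_apply]
    rw [cpow_mul_GammaSeq_div_GammaSeq_eq_exp hz hzs hN, exp_add,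
      mul_div_cancel_right₀ _ (exp_ne_zero _)]
  have hexp := norm_gammaRatioExponent_le hc hcz hc₁ hz hbig'
  refine norm_sub_one_le_of_tendsto_exp ?_ hexp hlim
  rw [div_le_one (norm_pos_iff.2 (slitPlane_ne_zero hz))]
  exact hbig

end SectorBounds

theorem tendsto_cpow_mul_Gamma_div_Gamma (s : ℂ) {θ : ℝ} (hθ : θ < π) :
    Tendsto (fun z ↦ z ^ (s - 1) * Gamma (z + 1) / Gamma (z + s))
      (Bornology.cobounded ℂ ⊓ 𝓟 {z | |z.arg| ≤ θ}) (𝓝 1) := by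
  set c := Real.cos (θ / 2)
  set M := 2 * (1 + ‖s - 1‖) ^ 2 / c ^ 2
  have hnorm : Tendsto (‖·‖) (Bornology.cobounded ℂ ⊓ 𝓟 {z | |z.arg| ≤ θ}) atTop :=
    tendsto_norm_cobounded_atTop.mono_left inf_le_left
  rw [tendsto_iff_norm_sub_tendsto_zero]
  refine squeeze_zero' (.of_forall fun _ ↦ norm_nonneg _) ?_
    (by simpa using (hnorm.const_div_atTop M).const_mul 2)
  filter_upwards [hnorm.eventually_ge_atTop (max M 1), mem_inf_of_right (mem_principal_self _)]
    with z hzM hzθ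
  have hz₀ : z ≠ 0 := norm_pos_iff.1 (by linarith [le_max_right M 1])
  have hc : 0 < c :=
    Real.cos_pos_of_mem_Ioo ⟨by linarith [(abs_nonneg z.arg).trans hzθ], by linarith⟩
  have hz : z ∈ slitPlane := mem_slitPlane_iff_arg.2 ⟨fun h ↦ by linarith [le_abs_self z.arg], hz₀⟩
  exact norm_cpow_mul_Gamma_div_Gamma_sub_one_le hc
    (fun t ht ↦ cos_half_mul_le_norm_add_ofReal hθ.le hzθ ht) (Real.cos_le_one _) hz
    ((le_max_left _ _).trans hzM)

end Complex

/-- The unfolded Stokes coefficient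
`μ⁺(ε) = (-2πi/(Γ(1-a)Γ(1-b)))·ε^{1-a-b}·Γ(1+1/ε)/Γ(a+b+1/ε)`
tends, as `ε → 0` in the sector `S⁺`, to the Stokes multiplier
`μ = -2πi/(Γ(1-a)Γ(1-b))`. -/
theorem muPlus_tendsto_mu (a b : ℂ) (γ : ℝ) (hγ : γ ∈ Set.Ioo 0 (π / 2)) :
    ∃ r : ℝ, 0 < r ∧
      Tendsto
        (fun ε : ℂ =>
          (-2 * π * I / (Complex.Gamma (1 - a) * Complex.Gamma (1 - b))) *
            ε ^ (1 - a - b) * Complex.Gamma (1 + 1 / ε) / Complex.Gamma (a + b + 1 / ε))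
        (nhdsWithin 0
          {ε : ℂ | 0 < ‖ε‖ ∧ ‖ε‖ < r ∧ ε.arg ∈ Set.Ioo (-π + γ) (π - γ)})
        (nhds (-2 * π * I / (Complex.Gamma (1 - a) * Complex.Gamma (1 - b)))) := by
  set S := {ε : ℂ | 0 < ‖ε‖ ∧ ‖ε‖ < 1 ∧ ε.arg ∈ Set.Ioo (-π + γ) (π - γ)}
  have harg : ∀ ε ∈ S, ε.arg ≠ π := fun ε hε ↦ by linarith [hε.2.2.2, hγ.1]
  have hinv : Tendsto (·⁻¹) (𝓝[S] 0) (Bornology.cobounded ℂ ⊓ 𝓟 {z | |z.arg| ≤ π - γ}) := by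
    refine tendsto_inf.2 ⟨tendsto_inv₀_nhdsNE_zero.mono_left
      (nhdsWithin_mono _ fun ε hε ↦ norm_pos_iff.1 hε.1), tendsto_principal.2 ?_⟩
    filter_upwards [self_mem_nhdsWithin] with ε hε
    simp only [abs_arg_inv]
    exact abs_le.2 ⟨by linarith [hε.2.2.1], hε.2.2.2.le⟩
  refine ⟨1, one_pos, ?_⟩
  have h := ((tendsto_cpow_mul_Gamma_div_Gamma (a + b) (by linarith [hγ.1])).comp hinv).const_mul
    (-2 * π * I / (Gamma (1 - a) * Gamma (1 - b)))
  rw [mul_one] at h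
  refine h.congr' (eventually_nhdsWithin_of_forall fun ε hε ↦ ?_)
  simp only [Function.comp_apply, one_div]
  rw [inv_cpow _ _ (harg ε hε), ← cpow_neg, neg_sub, add_comm _ (1 : ℂ), add_comm _ (a + b)]
  ring_nf
end

section
/- Let a, b ∈ ℂ, and let a', b', c', ε, ε' satisfy c' = 1 - (1-1/ε) + a + b, ε' = 1/(1-c'), a' = a, b' = b. If w is analytic on an open set U and satisfies x(x-ε)w''(x) + (1-ε+(a+b+1)x)w'(x) + ab·w(x) = 0 on U, then the function w̃ defined by w̃(x') = w(x) with x' = ε'(1 - x/ε) satisfies x'(x'-ε')w̃''(x') + (1-ε'+(a'+b'+1)x')w̃'(x') + a'b'·w̃(x') = 0 on the image of U under x ↦ ε'(1-x/ε). -/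
open Complex

/-!
The substitution `x = ε + k x'` with `k = 1 - ε + ε (a + b)` is affine, so it multiplies the first
and second derivatives by `k` and `k²`. The parameter relations amount to `ε' k = -ε`, under which
the coefficients transform as `x' (x' - ε') k² = x (x - ε)` and
`(1 - ε' + (a + b + 1) x') k = 1 - ε + (a + b + 1) x`, so the equation is carried to itself.
-/

section AffineChange

variable {𝕜 F : Type*} [NontriviallyNormedField 𝕜] [NormedAddCommGroup F] [NormedSpace 𝕜 F]

theorem deriv_comp_affine (f : 𝕜 → F) (p q x : 𝕜) :
    deriv (fun z => f (p + q * z)) x = q • deriv f (p + q * x) := by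
  rw [deriv_comp_mul_left q (fun y => f (p + y)) x, deriv_comp_const_add]

theorem deriv_deriv_comp_affine (f : 𝕜 → F) (p q x : 𝕜) :
    deriv (deriv fun z => f (p + q * z)) x = q ^ 2 • deriv (deriv f) (p + q * x) := by
  rw [funext (deriv_comp_affine f p q), deriv_fun_const_smul_field, deriv_comp_affine, smul_smul, sq]

end AffineChange

section Hypergeometric

variable {𝕜 : Type*} [NontriviallyNormedField 𝕜]

noncomputable def unfoldedHypergeometricOp (a b ε : 𝕜) (w : 𝕜 → 𝕜) (x : 𝕜) : 𝕜 :=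
  x * (x - ε) * deriv (deriv w) x + (1 - ε + (a + b + 1) * x) * deriv w x + a * b * w x

theorem unfoldedHypergeometricOp_comp_affine (a b ε ε' k : 𝕜) (w : 𝕜 → 𝕜) (x' : 𝕜)
    (hk : k = 1 - ε + ε * (a + b)) (hε'k : ε' * k = -ε) :
    unfoldedHypergeometricOp a b ε' (fun z => w (ε + k * z)) x' =
      unfoldedHypergeometricOp a b ε w (ε + k * x') := by
  simp only [unfoldedHypergeometricOp, deriv_comp_affine, deriv_deriv_comp_affine, smul_eq_mul]
  linear_combination (-(x' * k * deriv (deriv w) (ε + k * x')) - deriv w (ε + k * x')) * hε'k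
    + deriv w (ε + k * x') * hk

end Hypergeometric

theorem hypergeometric_symmetry_general (a b ε : ℂ) (hε : ε ≠ 0)
    (c c' ε' : ℂ) (hc : c = 1 - 1 / ε) (hc' : c' = 1 - c + a + b) (hc'1 : c' ≠ 1)
    (hε' : ε' = 1 / (1 - c'))
    (U : Set ℂ) (w : ℂ → ℂ)
    (hode : ∀ x ∈ U,
      x * (x - ε) * deriv (deriv w) x + (1 - ε + (a + b + 1) * x) * deriv w x
        + a * b * w x = 0) :
    ∀ x' ∈ (fun x : ℂ => ε' * (1 - x / ε)) '' U,
      x' * (x' - ε') *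
          deriv (deriv (fun z : ℂ => w (ε * (1 - z / ε')))) x' +
        (1 - ε' + (a + b + 1) * x') *
          deriv (fun z : ℂ => w (ε * (1 - z / ε'))) x' +
        a * b * w (ε * (1 - x' / ε')) = 0 := by
  rintro _ ⟨x, hx, rfl⟩
  obtain ⟨k, hk⟩ : ∃ k, k = 1 - ε + ε * (a + b) := ⟨_, rfl⟩
  have hε'k : ε' * k = -ε := by
    have hε'c' : ε' * (1 - c') = 1 := by
      rw [hε']
      exact one_div_mul_cancel (sub_ne_zero.mpr (Ne.symm hc'1))
    have hεc : ε * c = ε - 1 := by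
      rw [hc]
      field_simp
    linear_combination (-ε) * hε'c' + ε' * (hk - ε * hc' + hεc)
  have hε'0 : ε' ≠ 0 := left_ne_zero_of_mul (hε'k.trans_ne (neg_ne_zero.mpr hε))
  have hW : (fun z => w (ε * (1 - z / ε'))) = fun z => w (ε + k * z) := by
    funext z
    congr 1
    field_simp
    linear_combination (-z) * hε'k
  have hx' : ε + k * (ε' * (1 - x / ε)) = x := by
    field_simp
    linear_combination (ε - x) * hε'k
  show unfoldedHypergeometricOp a b ε' (fun z => w (ε * (1 - z / ε'))) (ε' * (1 - x / ε)) = 0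
  rw [hW, unfoldedHypergeometricOp_comp_affine a b ε ε' k w _ hk hε'k, hx']
  exact hode x hx

/-- The symmetry of the unfolded hypergeometric equation exchanging the two
regular singular points `x = 0` and `x = ε`: with `c = 1-1/ε`, `c' = 1-c+a+b`,
`ε' = 1/(1-c')`, the change of variable `x' = ε'(1-x/ε)` transforms solutions
of the equation with parameter `ε` into solutions of the equation with the
same `a, b` and parameter `ε'`. -/
theorem hypergeometric_symmetry (a b ε : ℂ) (hε : ε ≠ 0)
    (c c' ε' : ℂ) (hc : c = 1 - 1 / ε) (hc' : c' = 1 - c + a + b) (hc'1 : c' ≠ 1)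
    (hε' : ε' = 1 / (1 - c'))
    (U : Set ℂ) (hU : IsOpen U) (w : ℂ → ℂ) (hw : ∀ x ∈ U, AnalyticAt ℂ w x)
    (hode : ∀ x ∈ U,
      x * (x - ε) * deriv (deriv w) x + (1 - ε + (a + b + 1) * x) * deriv w x
        + a * b * w x = 0) :
    ∀ x' ∈ (fun x : ℂ => ε' * (1 - x / ε)) '' U,
      x' * (x' - ε') *
          deriv (deriv (fun z : ℂ => w (ε * (1 - z / ε')))) x' +
        (1 - ε' + (a + b + 1) * x') *
          deriv (fun z : ℂ => w (ε * (1 - z / ε'))) x' +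
        a * b * w (ε * (1 - x' / ε')) = 0 :=
  hypergeometric_symmetry_general a b ε hε c c' ε' hc hc' hc'1 hε' U w hode
end
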